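/- arXiv:1707.00775 — 2 statements merged into one kernel-verified Lean document; each statement's English description precedes it below -/
import Mathlib

section
/- Let k ≠ 0, λ ≠ 0 be reals, let w : ℝ → ℝ be twice differentiable with k·w'' = sin w, and let δ : ℝ² → ℝ be a differentiable function satisfying the system δ_α = [ (δ² − 1) sin w + 2δ(cos w + λ²/k) + λ(δ² + 1) w' ] / (4λ) and δ_β = [ (1 − δ²) sin w − 2δ(cos w − λ²/k) + λ(δ² + 1) w' ] / (4λ), where w, w' are evaluated at α. Then the functions ω(ξ,η) := w(kξ + η) and ω̃(ξ,η) := 4 arctan δ(kξ + η, kξ − η) − w(kξ + η) satisfy the Bäcklund transformation system with parameter λ: ((ω̃ − ω)/2)_ξ = λ sin((ω̃ + ω)/2) and ((ω̃ + ω)/2)_η = (1/λ) sin((ω̃ − ω)/2). -/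
/-- First partial derivative (w.r.t. the first variable) of a curried function of two
real variables. -/
noncomputable def pd1 (f : ℝ → ℝ → ℝ) (x y : ℝ) : ℝ := deriv (fun x' => f x' y) x

/-- Second partial derivative (w.r.t. the second variable). -/
noncomputable def pd2 (f : ℝ → ℝ → ℝ) (x y : ℝ) : ℝ := deriv (fun y' => f x y') y

/-- The pair `(ω, ω̃)` satisfies the Bäcklund transformation system for the sine-Gordon
equation with parameter `λ`. -/
def IsBacklund (lam : ℝ) (ω ω' : ℝ → ℝ → ℝ) : Prop :=
  (∀ ξ η : ℝ, pd1 (fun ξ η => (ω' ξ η - ω ξ η) / 2) ξ η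
      = lam * Real.sin ((ω' ξ η + ω ξ η) / 2)) ∧
  (∀ ξ η : ℝ, pd2 (fun ξ η => (ω' ξ η + ω ξ η) / 2) ξ η
      = (1 / lam) * Real.sin ((ω' ξ η - ω ξ η) / 2))

/-!
Put `θ = arctan δ(kξ + η, kξ - η)`, so that `(ω̃ + ω)/2 = 2θ` and `(ω̃ - ω)/2 = 2θ - ω`.
Moving in `ξ` moves `(α, β)` in the direction `(k, k)` and moving in `η` in the direction
`(1, -1)`, so `θ_ξ = k(δ_α + δ_β)/(1 + δ²)` and `θ_η = (δ_α - δ_β)/(1 + δ²)`. The sum and the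
difference of the two equations of the system are
`k(δ_α + δ_β) = λδ + k(1 + δ²)w'/2` and `δ_α - δ_β = ((δ² - 1) sin w + 2δ cos w)/(2λ)`;
with `sin 2θ = 2δ/(1 + δ²)` and `cos 2θ = (1 - δ²)/(1 + δ²)` these become the two
Bäcklund equations.
-/

open Real

theorem Real.sin_two_mul_arctan (x : ℝ) : sin (2 * arctan x) = 2 * x / (1 + x ^ 2) := by
  simpa [tan_arctan] using sin_eq_two_mul_tan_half_div_one_add_tan_half_sq (2 * arctan x)

theorem Real.cos_two_mul_arctan (x : ℝ) : cos (2 * arctan x) = (1 - x ^ 2) / (1 + x ^ 2) := by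
  rw [cos_two_mul, cos_sq_arctan]
  field_simp
  ring

section PartialDerivatives

variable {δ : ℝ → ℝ → ℝ} {x y : ℝ}

theorem hasDerivAt_pd1 (hδ : DifferentiableAt ℝ (fun p : ℝ × ℝ => δ p.1 p.2) (x, y)) :
    HasDerivAt (fun x' => δ x' y) (fderiv ℝ (fun p : ℝ × ℝ => δ p.1 p.2) (x, y) (1, 0)) x := by
  exact hδ.hasFDerivAt.comp_hasDerivAt x ((hasDerivAt_id x).prodMk (hasDerivAt_const x y))

theorem hasDerivAt_pd2 (hδ : DifferentiableAt ℝ (fun p : ℝ × ℝ => δ p.1 p.2) (x, y)) :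
    HasDerivAt (fun y' => δ x y') (fderiv ℝ (fun p : ℝ × ℝ => δ p.1 p.2) (x, y) (0, 1)) y := by
  exact hδ.hasFDerivAt.comp_hasDerivAt y ((hasDerivAt_const y x).prodMk (hasDerivAt_id y))

theorem HasDerivAt.curry_comp {f g : ℝ → ℝ} {f' g' t : ℝ}
    (hδ : DifferentiableAt ℝ (fun p : ℝ × ℝ => δ p.1 p.2) (f t, g t))
    (hf : HasDerivAt f f' t) (hg : HasDerivAt g g' t) :
    HasDerivAt (fun s => δ (f s) (g s)) (f' * pd1 δ (f t) (g t) + g' * pd2 δ (f t) (g t)) t := by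
  have h := hδ.hasFDerivAt.comp_hasDerivAt t (hf.prodMk hg)
  have hsplit : ((f', g') : ℝ × ℝ) = f' • ((1 : ℝ), (0 : ℝ)) + g' • ((0 : ℝ), (1 : ℝ)) := by
    simp
  rwa [hsplit, map_add, map_smul, map_smul, smul_eq_mul, smul_eq_mul,
    ← (hasDerivAt_pd1 hδ).deriv, ← (hasDerivAt_pd2 hδ).deriv] at h

end PartialDerivatives

def IsDeltaSystem (k lam : ℝ) (w : ℝ → ℝ) (δ : ℝ → ℝ → ℝ) : Prop :=
  (∀ α β : ℝ, pd1 δ α β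
      = (((δ α β) ^ 2 - 1) * sin (w α) + 2 * δ α β * (cos (w α) + lam ^ 2 / k)
          + lam * ((δ α β) ^ 2 + 1) * deriv w α) / (4 * lam)) ∧
  (∀ α β : ℝ, pd2 δ α β
      = ((1 - (δ α β) ^ 2) * sin (w α) - 2 * δ α β * (cos (w α) - lam ^ 2 / k)
          + lam * ((δ α β) ^ 2 + 1) * deriv w α) / (4 * lam))

namespace IsDeltaSystem

variable {k lam : ℝ} {w : ℝ → ℝ} {δ : ℝ → ℝ → ℝ}

theorem add_pd (h : IsDeltaSystem k lam w δ) (hk : k ≠ 0) (hlam : lam ≠ 0) (α β : ℝ) :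
    k * (pd1 δ α β + pd2 δ α β) = lam * δ α β + k * (δ α β ^ 2 + 1) * deriv w α / 2 := by
  rw [h.1, h.2]
  field_simp
  ring

theorem sub_pd (h : IsDeltaSystem k lam w δ) (hlam : lam ≠ 0) (α β : ℝ) :
    pd1 δ α β - pd2 δ α β = ((δ α β ^ 2 - 1) * sin (w α) + 2 * δ α β * cos (w α)) / (2 * lam) := by
  rw [h.1, h.2]
  field_simp
  ring

theorem hasDerivAt_backlund_fst (h : IsDeltaSystem k lam w δ) (hk : k ≠ 0)
    (hlam : lam ≠ 0) (hw : Differentiable ℝ w)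
    (hδ : Differentiable ℝ fun p : ℝ × ℝ => δ p.1 p.2) (ξ η : ℝ) :
    HasDerivAt
      (fun s => (4 * arctan (δ (k * s + η) (k * s - η)) - w (k * s + η) - w (k * s + η)) / 2)
      (lam * sin (2 * arctan (δ (k * ξ + η) (k * ξ - η)))) ξ := by
  have hα : HasDerivAt (fun s => k * s + η) k ξ := by
    simpa using ((hasDerivAt_id ξ).const_mul k).add_const η
  have hβ : HasDerivAt (fun s => k * s - η) k ξ := by
    simpa using ((hasDerivAt_id ξ).const_mul k).sub_const η
  have hθ := (HasDerivAt.curry_comp (hδ _) hα hβ).arctan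
  have hwα := (hw _).hasDerivAt.comp ξ hα
  refine ((((hθ.const_mul 4).sub hwα).sub hwα).div_const 2).congr_deriv ?_
  rw [← mul_add, h.add_pd hk hlam, sin_two_mul_arctan]
  field_simp
  ring

theorem hasDerivAt_backlund_snd (h : IsDeltaSystem k lam w δ)
    (hlam : lam ≠ 0) (hw : Differentiable ℝ w)
    (hδ : Differentiable ℝ fun p : ℝ × ℝ => δ p.1 p.2) (ξ η : ℝ) :
    HasDerivAt
      (fun t => (4 * arctan (δ (k * ξ + t) (k * ξ - t)) - w (k * ξ + t) + w (k * ξ + t)) / 2)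
      (1 / lam * sin (2 * arctan (δ (k * ξ + η) (k * ξ - η)) - w (k * ξ + η))) η := by
  have hα : HasDerivAt (fun t => k * ξ + t) 1 η := by
    simpa using (hasDerivAt_id η).const_add (k * ξ)
  have hβ : HasDerivAt (fun t => k * ξ - t) (-1) η := by
    simpa using (hasDerivAt_id η).const_sub (k * ξ)
  have hθ := (HasDerivAt.curry_comp (hδ _) hα hβ).arctan
  have hwα := (hw _).hasDerivAt.comp η hα
  refine ((((hθ.const_mul 4).sub hwα).add hwα).div_const 2).congr_deriv ?_
  rw [one_mul, neg_one_mul, ← sub_eq_add_neg, h.sub_pd hlam, sin_sub, sin_two_mul_arctan,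
    cos_two_mul_arctan]
  field_simp
  ring

end IsDeltaSystem

theorem backlund_from_delta_system_general (k lam : ℝ) (hk : k ≠ 0) (hlam : lam ≠ 0)
    (w : ℝ → ℝ) (hw : Differentiable ℝ w)
    (δ : ℝ → ℝ → ℝ)
    (hδdiff : Differentiable ℝ fun p : ℝ × ℝ => δ p.1 p.2)
    (hδα : ∀ α β : ℝ, pd1 δ α β
      = (((δ α β) ^ 2 - 1) * Real.sin (w α)
          + 2 * δ α β * (Real.cos (w α) + lam ^ 2 / k)
          + lam * ((δ α β) ^ 2 + 1) * deriv w α) / (4 * lam))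
    (hδβ : ∀ α β : ℝ, pd2 δ α β
      = ((1 - (δ α β) ^ 2) * Real.sin (w α)
          - 2 * δ α β * (Real.cos (w α) - lam ^ 2 / k)
          + lam * ((δ α β) ^ 2 + 1) * deriv w α) / (4 * lam)) :
    IsBacklund lam (fun ξ η => w (k * ξ + η))
      (fun ξ η => 4 * Real.arctan (δ (k * ξ + η) (k * ξ - η)) - w (k * ξ + η)) := by
  have h : IsDeltaSystem k lam w δ := ⟨hδα, hδβ⟩
  refine ⟨fun ξ η => ?_, fun ξ η => ?_⟩
  · rw [pd1, (h.hasDerivAt_backlund_fst hk hlam hw hδdiff ξ η).deriv]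
    congr 2
    ring
  · rw [pd2, (h.hasDerivAt_backlund_snd hlam hw hδdiff ξ η).deriv]
    congr 2
    ring

/-- If `δ(α,β)` satisfies the Riccati-type system in the `α,β` variables, then
`ω(ξ,η) := w(kξ+η)` and `ω̃(ξ,η) := 4 arctan δ(kξ+η, kξ−η) − w(kξ+η)` satisfy the
Bäcklund transformation system with parameter `λ`. -/
theorem backlund_from_delta_system (k lam : ℝ) (hk : k ≠ 0) (hlam : lam ≠ 0)
    (w : ℝ → ℝ) (hw : Differentiable ℝ w) (hw' : Differentiable ℝ (deriv w))
    (hode : ∀ α : ℝ, k * deriv (deriv w) α = Real.sin (w α))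
    (δ : ℝ → ℝ → ℝ)
    (hδdiff : Differentiable ℝ fun p : ℝ × ℝ => δ p.1 p.2)
    (hδα : ∀ α β : ℝ, pd1 δ α β
      = (((δ α β) ^ 2 - 1) * Real.sin (w α)
          + 2 * δ α β * (Real.cos (w α) + lam ^ 2 / k)
          + lam * ((δ α β) ^ 2 + 1) * deriv w α) / (4 * lam))
    (hδβ : ∀ α β : ℝ, pd2 δ α β
      = ((1 - (δ α β) ^ 2) * Real.sin (w α)
          - 2 * δ α β * (Real.cos (w α) - lam ^ 2 / k)
          + lam * ((δ α β) ^ 2 + 1) * deriv w α) / (4 * lam)) :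
    IsBacklund lam (fun ξ η => w (k * ξ + η))
      (fun ξ η => 4 * Real.arctan (δ (k * ξ + η) (k * ξ - η)) - w (k * ξ + η)) :=
  backlund_from_delta_system_general k lam hk hlam w hw δ hδdiff hδα hδβ
end

section
/- Let λ ≠ 0 and let ω, ω̃ : ℝ² → ℝ be differentiable functions satisfying the Bäcklund transformation system with parameter λ. Then the system defining the potential g is compatible: ∂_η[ λ cos((ω̃ + ω)/2) ] = ∂_ξ[ (1/λ) cos((ω̃ − ω)/2) ], so that the two equations g_ξ = λ g cos((ω̃ + ω)/2), g_η = (g/λ) cos((ω̃ − ω)/2) admit a common nonvanishing solution locally. -/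
/-! With `A = (ω̃ - ω)/2` and `B = (ω̃ + ω)/2` the Bäcklund system reads `A_ξ = λ sin B`,
`B_η = λ⁻¹ sin A`, so by the chain rule both `∂_η (λ cos B)` and `∂_ξ (λ⁻¹ cos A)` equal
`-sin A sin B`. The 1-form `λ cos B dξ + λ⁻¹ cos A dη` is therefore closed, hence exact on the
plane: `φ(ξ, η) = ∫₀^ξ λ cos B(s, 0) ds + ∫₀^η λ⁻¹ cos A(ξ, t) dt` is a potential (differentiate
under the integral sign and use the closedness), and `g = exp φ` solves both equations. -/

open MeasureTheory

theorem Differentiable.hasDerivAt_pd1 {f : ℝ → ℝ → ℝ}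
    (hf : Differentiable ℝ fun p : ℝ × ℝ => f p.1 p.2) (x y : ℝ) :
    HasDerivAt (fun x => f x y) (pd1 f x y) x :=
  ((hf (x, y)).comp (f := fun x => (x, y)) x
    (differentiableAt_id.prodMk (differentiableAt_const y))).hasDerivAt

theorem Differentiable.hasDerivAt_pd2 {f : ℝ → ℝ → ℝ}
    (hf : Differentiable ℝ fun p : ℝ × ℝ => f p.1 p.2) (x y : ℝ) :
    HasDerivAt (f x) (pd2 f x y) y :=
  ((hf (x, y)).comp (f := fun y => (x, y)) y
    ((differentiableAt_const x).prodMk differentiableAt_id)).hasDerivAt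

theorem HasDerivAt.const_mul_cos_of_mul_eq_one {f : ℝ → ℝ} {x c k s : ℝ} (hck : c * k = 1)
    (hf : HasDerivAt f (k * Real.sin s) x) :
    HasDerivAt (fun x => c * Real.cos (f x)) (-(Real.sin (f x) * Real.sin s)) x := by
  refine (hf.cos.const_mul c).congr_deriv ?_
  linear_combination -(Real.sin (f x) * Real.sin s) * hck

theorem exists_potential_of_hasDerivAt_eq (P Q D : ℝ → ℝ → ℝ) (C : ℝ)
    (hP : ∀ x y, HasDerivAt (P x) (D x y) y)
    (hQ : ∀ x y, HasDerivAt (fun x => Q x y) (D x y) x)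
    (hD : ∀ x y, |D x y| ≤ C)
    (hP_cont : ∀ y, Continuous fun x => P x y)
    (hQ_cont : ∀ x, Continuous (Q x)) :
    ∃ φ : ℝ → ℝ → ℝ, ∀ x y,
      HasDerivAt (fun x => φ x y) (P x y) x ∧ HasDerivAt (φ x) (Q x y) y := by
  refine ⟨fun x y => (∫ s in (0 : ℝ)..x, P s 0) + ∫ t in (0 : ℝ)..y, Q x t, fun x y => ⟨?_, ?_⟩⟩
  · have hD_meas : Measurable (D x) := by
      rw [show D x = deriv (P x) from funext fun y => (hP x y).deriv.symm]
      exact measurable_deriv _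
    obtain ⟨hD_int, hQ_int⟩ := intervalIntegral.hasDerivAt_integral_of_dominated_loc_of_deriv_le
      (μ := volume) (a := 0) (b := y) (bound := fun _ => C) (F' := D) Filter.univ_mem
      (.of_forall fun x => (hQ_cont x).aestronglyMeasurable)
      ((hQ_cont x).intervalIntegrable 0 y) hD_meas.aestronglyMeasurable
      (ae_of_all _ fun t _ x _ => by simpa using hD x t) intervalIntegrable_const
      (ae_of_all _ fun t _ x _ => hQ x t)
    have hFTC : ∫ t in (0 : ℝ)..y, D x t = P x y - P x 0 :=
      intervalIntegral.integral_eq_sub_of_hasDerivAt (fun t _ => hP x t) hD_int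
    refine (((hP_cont 0).integral_hasStrictDerivAt 0 x).hasDerivAt.add hQ_int).congr_deriv ?_
    rw [hFTC]; ring
  · exact ((hQ_cont x).integral_hasStrictDerivAt 0 y).hasDerivAt.const_add _

/-- Compatibility of the system defining the potential `g`:
`∂_η[λ cos((ω̃+ω)/2)] = ∂_ξ[(1/λ) cos((ω̃−ω)/2)]`, so that the two equations
`g_ξ = λ g cos((ω̃+ω)/2)`, `g_η = (g/λ) cos((ω̃−ω)/2)` admit a common nonvanishing
solution locally. -/
theorem potential_g_compatibility (lam : ℝ) (hlam : lam ≠ 0)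
    (ω ω' : ℝ → ℝ → ℝ)
    (hω : Differentiable ℝ fun p : ℝ × ℝ => ω p.1 p.2)
    (hω' : Differentiable ℝ fun p : ℝ × ℝ => ω' p.1 p.2)
    (hB : IsBacklund lam ω ω') :
    (∀ ξ η : ℝ,
      pd2 (fun ξ η => lam * Real.cos ((ω' ξ η + ω ξ η) / 2)) ξ η
        = pd1 (fun ξ η => (1 / lam) * Real.cos ((ω' ξ η - ω ξ η) / 2)) ξ η) ∧
    (∀ ξ₀ η₀ : ℝ, ∃ ε > (0 : ℝ), ∃ g : ℝ → ℝ → ℝ,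
      ∀ ξ η : ℝ, (ξ, η) ∈ Metric.ball ((ξ₀ : ℝ), (η₀ : ℝ)) ε →
        g ξ η ≠ 0 ∧
        pd1 g ξ η = lam * g ξ η * Real.cos ((ω' ξ η + ω ξ η) / 2) ∧
        pd2 g ξ η = (g ξ η / lam) * Real.cos ((ω' ξ η - ω ξ η) / 2)) := by
  set A : ℝ → ℝ → ℝ := fun ξ η => (ω' ξ η - ω ξ η) / 2
  set B : ℝ → ℝ → ℝ := fun ξ η => (ω' ξ η + ω ξ η) / 2
  have hA_diff : Differentiable ℝ fun p : ℝ × ℝ => A p.1 p.2 := by dsimp only [A]; fun_prop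
  have hB_diff : Differentiable ℝ fun p : ℝ × ℝ => B p.1 p.2 := by dsimp only [B]; fun_prop
  have hP : ∀ ξ η, HasDerivAt (fun η => lam * Real.cos (B ξ η))
      (-(Real.sin (A ξ η) * Real.sin (B ξ η))) η := fun ξ η =>
    (((hB_diff.hasDerivAt_pd2 ξ η).congr_deriv (hB.2 ξ η)).const_mul_cos_of_mul_eq_one
      (mul_one_div_cancel hlam)).congr_deriv (by ring)
  have hQ : ∀ ξ η, HasDerivAt (fun ξ => 1 / lam * Real.cos (A ξ η))
      (-(Real.sin (A ξ η) * Real.sin (B ξ η))) ξ := fun ξ η =>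
    ((hA_diff.hasDerivAt_pd1 ξ η).congr_deriv (hB.1 ξ η)).const_mul_cos_of_mul_eq_one
      (one_div_mul_cancel hlam)
  refine ⟨fun ξ η => (hP ξ η).deriv.trans (hQ ξ η).deriv.symm, fun ξ₀ η₀ => ?_⟩
  obtain ⟨φ, hφ⟩ := exists_potential_of_hasDerivAt_eq _ _ _ 1 hP hQ
    (fun ξ η => by
      rw [abs_neg, abs_mul]
      exact mul_le_one₀ (Real.abs_sin_le_one _) (abs_nonneg _) (Real.abs_sin_le_one _))
    (fun η => (Real.continuous_cos.comp (hB_diff.continuous.uncurry_right (f := B) η)).const_mul lam)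
    (fun ξ => (Real.continuous_cos.comp (hA_diff.continuous.uncurry_left (f := A) ξ)).const_mul _)
  -- `exp φ` solves the system on the whole plane, so any radius will do
  refine ⟨1, one_pos, fun ξ η => Real.exp (φ ξ η), fun ξ η _ => ⟨Real.exp_ne_zero _, ?_, ?_⟩⟩
  · rw [pd1, (hφ ξ η).1.exp.deriv]
    ring
  · rw [pd2, (hφ ξ η).2.exp.deriv]
    ring
end
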